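/- arXiv:2101.05680 — 5 statements merged into one kernel-verified Lean document; each statement's English description precedes it below -/
import Mathlib

section
/- Let q be a proper asymmetric norm on X with witness u. Then −u is an interior point of the cone K_q = {x : q(x) = 0} with respect to the norm q^s(x) = max{q(x), q(−x)}; in fact the q^s-open set {x : q(x) < 1} − u is contained in K_q. -/
theorem stmt_9 {X : Type*} [NormedAddCommGroup X] [NormedSpace ℝ X] (q : X → ℝ)
    (hnonneg : ∀ x, 0 ≤ q x)
    (hhom : ∀ t : ℝ, 0 ≤ t → ∀ x, q (t • x) = t * q x)
    (hsub : ∀ x y, q (x + y) ≤ q x + q y)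
    (hdef : ∀ x, q x = 0 → q (-x) = 0 → x = 0)
    (hnorm : ∀ x, ‖x‖ = max (q x) (q (-x)))
    (u : X) (hu : q u = 1) (hproper : ∀ x, q (x - q x • u) = 0) :
    IsOpen ((fun x => x - u) '' {x : X | q x < 1}) ∧
    ((fun x => x - u) '' {x : X | q x < 1} ⊆ {x : X | q x = 0}) ∧
    -u ∈ interior {x : X | q x = 0} := by
  -- q is 1-Lipschitz hence continuous
  have hle : ∀ x y : X, q x - q y ≤ ‖x - y‖ := by
    intro x y
    have := hsub (x - y) y
    simp only [sub_add_cancel] at this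
    have h2 : q (x - y) ≤ ‖x - y‖ := by rw [hnorm]; exact le_max_left _ _
    linarith
  have hcont : Continuous q := by
    apply (LipschitzWith.continuous (K := 1))
    intro x y
    rw [edist_dist, Real.dist_eq, ENNReal.coe_one, one_mul, edist_dist, dist_eq_norm]
    apply ENNReal.ofReal_le_ofReal
    rw [abs_sub_le_iff]
    constructor
    · exact hle x y
    · have := hle y x
      rwa [← neg_sub x y, norm_neg] at this
  -- q(-u) = 0
  have hq0 : q 0 = 0 := by
    have := hhom 0 le_rfl 0
    simpa using this
  have hnu : q (-u) = 0 := by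
    have h1 := hproper (-u)
    have h2 : -u - q (-u) • u = (1 + q (-u)) • (-u) := by
      rw [add_smul, one_smul, smul_neg]; abel
    rw [h2, hhom _ (by linarith [hnonneg (-u)]) (-u)] at h1
    have := hnonneg (-u)
    nlinarith
  -- subset
  have hsubset : (fun x => x - u) '' {x : X | q x < 1} ⊆ {x : X | q x = 0} := by
    rintro y ⟨x, hx, rfl⟩
    have hx' : q x < 1 := hx
    have key : x - u = (x - q x • u) + (1 - q x) • (-u) := by
      rw [smul_neg, sub_smul, one_smul]; abel
    have : q (x - u) ≤ q (x - q x • u) + q ((1 - q x) • (-u)) := by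
      rw [key]; exact hsub _ _
    rw [hproper x, hhom _ (by linarith) (-u), hnu, mul_zero, zero_add] at this
    exact le_antisymm this (hnonneg _)
  -- image rewritten as preimage
  have himg : (fun x => x - u) '' {x : X | q x < 1} = {y : X | q (y + u) < 1} := by
    ext y
    constructor
    · rintro ⟨x, hx, rfl⟩; simpa using hx
    · intro hy; exact ⟨y + u, hy, by simp⟩
  have hopen : IsOpen ((fun x => x - u) '' {x : X | q x < 1}) := by
    rw [himg]
    exact isOpen_lt (hcont.comp (continuous_id.add continuous_const)) continuous_const
  refine ⟨hopen, hsubset, ?_⟩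
  apply interior_maximal hsubset hopen
  exact ⟨0, by simpa [hq0] using zero_lt_one, by simp⟩
end

section
/- Let Q, R : X → X be mutually polar retractions on a real normed space with R(X) one-dimensional, say Rx = q(x)u with q(u) = 1, and suppose R is subadditive with respect to the ordering induced by R(X). Then q is a proper asymmetric norm: q is positively homogeneous, subadditive, q(x)=q(−x)=0 implies x = 0, and q(x − q(x)u) = 0 for all x ∈ X. -/
def IsRetraction {X : Type*} [NormedAddCommGroup X] [NormedSpace ℝ X] (T : X → X) : Prop :=
  Continuous T ∧
  (∀ x, T (T x) = T x) ∧
  (∀ t : ℝ, 0 ≤ t → ∀ x, T (t • x) = t • T x) ∧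
  Set.range T ≠ {0} ∧
  IsClosed (Set.range T) ∧
  Convex ℝ (Set.range T) ∧
  (∀ t : ℝ, 0 ≤ t → ∀ x ∈ Set.range T, t • x ∈ Set.range T) ∧
  (Set.range T ∩ -Set.range T = {0}) ∧
  (∀ x, x ∉ Set.range T → T x ∈ frontier (Set.range T))

def MutuallyPolar {X : Type*} [NormedAddCommGroup X] [NormedSpace ℝ X] (Q R : X → X) : Prop :=
  IsRetraction Q ∧ IsRetraction R ∧
  (∀ x, Q x + R x = x) ∧ (∀ x, Q (R x) = 0) ∧ (∀ x, R (Q x) = 0)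

theorem stmt_13 {X : Type*} [NormedAddCommGroup X] [NormedSpace ℝ X]
    (Q R : X → X) (hpolar : MutuallyPolar Q R)
    (u : X) (hu : u ≠ 0) (q : X → ℝ)
    (hR : ∀ x, R x = q x • u) (hqu : q u = 1)
    (hrange : Set.range R = {x : X | ∃ t : ℝ, 0 ≤ t ∧ x = t • u})
    (hRsub : ∀ x y, R x + R y - R (x + y) ∈ Set.range R) :
    (∀ x, 0 ≤ q x) ∧
    (∀ t : ℝ, 0 ≤ t → ∀ x, q (t • x) = t * q x) ∧
    (∀ x y, q (x + y) ≤ q x + q y) ∧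
    (∀ x, q x = 0 → q (-x) = 0 → x = 0) ∧
    (∀ x, q (x - q x • u) = 0) := by
  obtain ⟨hQ, hRret, hsum, hQR, hRQ⟩ := hpolar
  -- cancellation of smul by u
  have hcancel : ∀ a b : ℝ, a • u = b • u → a = b := by
    intro a b h
    have : (a - b) • u = 0 := by rw [sub_smul, h, sub_self]
    rcases smul_eq_zero.mp this with h' | h'
    · exact sub_eq_zero.mp h'
    · exact absurd h' hu
  have hpos : ∀ x, 0 ≤ q x := by
    intro x
    have hx : R x ∈ Set.range R := ⟨x, rfl⟩
    rw [hrange] at hx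
    obtain ⟨t, ht, hxt⟩ := hx
    rw [hR] at hxt
    have := hcancel _ _ hxt
    linarith
  refine ⟨hpos, ?_, ?_, ?_, ?_⟩
  · intro t ht x
    have := hRret.2.2.1 t ht x
    rw [hR, hR, smul_smul] at this
    exact hcancel _ _ this
  · intro x y
    have h := hRsub x y
    rw [hrange] at h
    obtain ⟨t, ht, hxt⟩ := h
    rw [hR, hR, hR] at hxt
    have : (q x + q y - q (x + y)) • u = t • u := by
      rw [← hxt]; module
    have := hcancel _ _ this
    linarith
  · intro x h1 h2
    have hx : Q x = x := by
      have := hsum x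
      rw [hR, h1, zero_smul, add_zero] at this
      exact this
    have hx' : Q (-x) = -x := by
      have := hsum (-x)
      rw [hR, h2, zero_smul, add_zero] at this
      exact this
    have hpt := hQ.2.2.2.2.2.2.2.1
    have hmem : x ∈ Set.range Q ∩ -Set.range Q :=
      ⟨⟨x, hx⟩, ⟨-x, hx'⟩⟩
    rw [hpt] at hmem
    exact hmem
  · intro x
    have h1 : x - q x • u = Q x := by
      have := hsum x
      rw [hR] at this
      exact (eq_sub_of_add_eq this).symm
    have h2 := hRQ x
    rw [hR] at h2
    have : q (Q x) = 0 := by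
      have := hcancel (q (Q x)) 0 (by rw [h2]; simp)
      simpa using this
    rw [h1, this]
end

section
/- Let Q, R : X → X be mutually polar retractions with Q(X) = M, R(X) = {tu : t ≥ 0} one-dimensional, Rx = q(x)u, q(u)=1, and R subadditive. Then M = K_q := {x ∈ X : q(x) = 0}. -/
theorem stmt_14 {X : Type*} [NormedAddCommGroup X] [NormedSpace ℝ X]
    (Q R : X → X) (hpolar : MutuallyPolar Q R)
    (u : X) (hu : u ≠ 0) (q : X → ℝ)
    (hR : ∀ x, R x = q x • u) (hqu : q u = 1)
    (hrange : Set.range R = {x : X | ∃ t : ℝ, 0 ≤ t ∧ x = t • u})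
    (hRsub : ∀ x y, R x + R y - R (x + y) ∈ Set.range R) :
    Set.range Q = {x : X | q x = 0} := by
  obtain ⟨-, -, hQR, -, hRQ⟩ := hpolar
  ext x
  constructor
  · rintro ⟨y, rfl⟩
    have h : q (Q y) • u = 0 := by rw [← hR]; exact hRQ y
    rcases smul_eq_zero.mp h with h0 | h0
    · exact h0
    · exact absurd h0 hu
  · intro hx
    have hRx : R x = 0 := by rw [hR, hx, zero_smul]
    exact ⟨x, by have := hQR x; rw [hRx, add_zero] at this; exact this⟩
end

section
/- Let Q, R : X → X be mutually polar retractions with Rx = q(x)u, and suppose R is subadditive and −R(X) ⊆ Q(X). Then Q is subadditive with respect to the cone M = Q(X), i.e., Qx + Qy − Q(x+y) ∈ M for all x, y ∈ X. -/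
theorem stmt_16 {X : Type*} [NormedAddCommGroup X] [NormedSpace ℝ X]
    (Q R : X → X) (hpolar : MutuallyPolar Q R)
    (u : X) (q : X → ℝ) (hR : ∀ x, R x = q x • u)
    (hRsub : ∀ x y, R (x + y) - R x - R y ∈ -Set.range R)
    (hneg : -Set.range R ⊆ Set.range Q) :
    ∀ x y, Q x + Q y - Q (x + y) ∈ Set.range Q := by
  intro x y
  have hI := hpolar.2.2.1
  have key : Q x + Q y - Q (x + y) = R (x + y) - R x - R y := by
    have h1 := hI x; have h2 := hI y; have h3 := hI (x + y)
    have e1 : Q x = x - R x := eq_sub_of_add_eq h1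
    have e2 : Q y = y - R y := eq_sub_of_add_eq h2
    have e3 : Q (x + y) = (x + y) - R (x + y) := eq_sub_of_add_eq h3
    rw [e1, e2, e3]; abel
  rw [key]
  exact hneg (hRsub x y)
end

section
/- Let M ⊆ X be a proper cone in a real normed space with −u ∈ int M, q the gauge of M + u, Rx = q(x)u and Q = I − R. Then both Q and R are subadditive: R(x+y) − Rx − Ry ∈ −R(X) and Qx + Qy − Q(x+y) ∈ M for all x, y ∈ X. -/
/-! Translating the cone by `u` puts the origin in the interior of the convex set `M + u`, so its
gauge `q` is a subadditive, positively homogeneous function. Since `-u ∈ M` and `M` is pointed,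
`q u = 1` whenever `u ≠ 0`, so `R (c • u) = c • u` for all `c ≥ 0`: the ray `R(X)` is all of
`[0, ∞) • u`. Both defects `R (x + y) - R x - R y` and `Q x + Q y - Q (x + y)` equal
`(q x + q y - q (x + y)) • (-u)`, a nonnegative multiple of `-u`. -/

section Cone

open scoped Pointwise

variable {X : Type*} [AddCommGroup X] [Module ℝ X] {M : Set X} {u : X}

theorem convex_image_add_right (hconv : Convex ℝ M) (u : X) :
    Convex ℝ ((fun k => k + u) '' M) := by
  simpa only [add_comm] using hconv.translate u

theorem mem_of_mem_smul_image_add_right (hsmul : ∀ t : ℝ, 0 ≤ t → ∀ x ∈ M, t • x ∈ M)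
    {b : ℝ} (hb₀ : 0 < b) (hb₁ : b < 1) (hu : u ∈ b • (fun k => k + u) '' M) : u ∈ M := by
  obtain ⟨_, ⟨m, hm, rfl⟩, hbm⟩ := hu
  have hmu : b • m = (1 - b) • u := by
    linear_combination (norm := module) (hbm : b • (m + u) = u)
  have h1b : 0 < 1 - b := sub_pos.mpr hb₁
  have : (b / (1 - b)) • m = u := by
    rw [div_eq_inv_mul, mul_smul, hmu, smul_smul, inv_mul_cancel₀ h1b.ne', one_smul]
  exact this ▸ hsmul _ (div_nonneg hb₀.le h1b.le) m hm

theorem gauge_image_add_right_self (hsmul : ∀ t : ℝ, 0 ≤ t → ∀ x ∈ M, t • x ∈ M)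
    (hpointed : M ∩ -M = {0}) (hneg : -u ∈ M) (habs : Absorbent ℝ ((fun k => k + u) '' M))
    (hu : u ≠ 0) : gauge ((fun k => k + u) '' M) u = 1 := by
  have h0 : (0 : X) ∈ M := (hpointed.symm ▸ rfl : (0 : X) ∈ M ∩ -M).1
  refine le_antisymm (gauge_le_one_of_mem ⟨0, h0, zero_add u⟩) (not_lt.mp fun hlt => hu ?_)
  obtain ⟨b, hb₀, hb₁, hub⟩ := exists_lt_of_gauge_lt habs hlt
  have : u ∈ M ∩ -M := ⟨mem_of_mem_smul_image_add_right hsmul hb₀ hb₁ hub, hneg⟩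
  simpa [hpointed] using this

theorem gauge_image_add_right_smul_self_smul (hsmul : ∀ t : ℝ, 0 ≤ t → ∀ x ∈ M, t • x ∈ M)
    (hpointed : M ∩ -M = {0}) (hneg : -u ∈ M) (habs : Absorbent ℝ ((fun k => k + u) '' M))
    {c : ℝ} (hc : 0 ≤ c) : gauge ((fun k => k + u) '' M) (c • u) • u = c • u := by
  rcases eq_or_ne u 0 with rfl | hu
  · simp
  rw [gauge_smul_of_nonneg hc, gauge_image_add_right_self hsmul hpointed hneg habs hu,
    smul_eq_mul, mul_one]

theorem absorbent_image_add_right [TopologicalSpace X] [IsTopologicalAddGroup X]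
    [ContinuousSMul ℝ X] (hint : -u ∈ interior M) : Absorbent ℝ ((fun k => k + u) '' M) := by
  refine absorbent_nhds_zero (mem_interior_iff_mem_nhds.mp ?_)
  exact (isOpenMap_add_right u).image_interior_subset M ⟨-u, hint, neg_add_cancel u⟩

end Cone

theorem stmt_18_general {X : Type*} [NormedAddCommGroup X] [NormedSpace ℝ X]
    (M : Set X) (u : X)
    (hconv : Convex ℝ M)
    (hsmul : ∀ t : ℝ, 0 ≤ t → ∀ x ∈ M, t • x ∈ M)
    (hpointed : M ∩ -M = {0})
    (hint : -u ∈ interior M)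
    (q : X → ℝ) (hq : ∀ x, q x = gauge ((fun k => k + u) '' M) x)
    (R Q : X → X) (hRdef : ∀ x, R x = q x • u) (hQdef : ∀ x, Q x = x - R x) :
    (∀ x y, R (x + y) - R x - R y ∈ -Set.range R) ∧
    (∀ x y, Q x + Q y - Q (x + y) ∈ M) := by
  have habs := absorbent_image_add_right hint
  have hdefect_nonneg (x y : X) : 0 ≤ q x + q y - q (x + y) := by
    simpa only [hq, sub_nonneg] using gauge_add_le (convex_image_add_right hconv u) habs x y
  have hRdefect (x y : X) : R (x + y) - R x - R y = -((q x + q y - q (x + y)) • u) := by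
    simp only [hRdef]; module
  refine ⟨fun x y => ?_, fun x y => ?_⟩
  · rw [hRdefect, Set.neg_mem_neg]
    refine ⟨(q x + q y - q (x + y)) • u, ?_⟩
    rw [hRdef, hq, gauge_image_add_right_smul_self_smul hsmul hpointed (interior_subset hint) habs
      (hdefect_nonneg x y)]
  · have : Q x + Q y - Q (x + y) = (q x + q y - q (x + y)) • (-u) := by
      simp only [hQdef, hRdef]; module
    exact this ▸ hsmul _ (hdefect_nonneg x y) _ (interior_subset hint)

theorem stmt_18 {X : Type*} [NormedAddCommGroup X] [NormedSpace ℝ X]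
    (M : Set X) (u : X)
    (hconv : Convex ℝ M)
    (hsmul : ∀ t : ℝ, 0 ≤ t → ∀ x ∈ M, t • x ∈ M)
    (hpointed : M ∩ -M = {0})
    (hclosed : IsClosed M)
    (hint : -u ∈ interior M)
    (q : X → ℝ) (hq : ∀ x, q x = gauge ((fun k => k + u) '' M) x)
    (R Q : X → X) (hRdef : ∀ x, R x = q x • u) (hQdef : ∀ x, Q x = x - R x) :
    (∀ x y, R (x + y) - R x - R y ∈ -Set.range R) ∧
    (∀ x y, Q x + Q y - Q (x + y) ∈ M) :=
  stmt_18_general M u hconv hsmul hpointed hint q hq R Q hRdef hQdef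
end
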